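/- On polynomials in x, u ∈ ℝ^m, define the projected twistor operator T = ⟨u,∂_x⟩ - |u|²⟨∂_u,∂_x⟩/(2E_u + m - 4) formally on homogeneous components where E_u acts by a scalar k with 2k + m - 4 ≠ 0. Then for any polynomial f that is harmonic in u (Δ_u f = 0) and homogeneous of degree k in u, Tf is again harmonic in u: Δ_u (T f) = 0. -/

import Mathlib

open MvPolynomial

noncomputable section

/-- The Laplacian in the `x`-variables (first component `0`). -/
def lapX {m : ℕ} (P : MvPolynomial (Fin 2 × Fin m) ℝ) : MvPolynomial (Fin 2 × Fin m) ℝ :=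
  ∑ j : Fin m, pderiv ((0 : Fin 2), j) (pderiv ((0 : Fin 2), j) P)

/-- The Laplacian in the `u`-variables (first component `1`). -/
def lapU {m : ℕ} (P : MvPolynomial (Fin 2 × Fin m) ℝ) : MvPolynomial (Fin 2 × Fin m) ℝ :=
  ∑ j : Fin m, pderiv ((1 : Fin 2), j) (pderiv ((1 : Fin 2), j) P)

/-- `⟨u,∂_x⟩ = Σ_j u_j ∂_{x_j}`. -/
def uDx {m : ℕ} (P : MvPolynomial (Fin 2 × Fin m) ℝ) : MvPolynomial (Fin 2 × Fin m) ℝ :=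
  ∑ j : Fin m, X ((1 : Fin 2), j) * pderiv ((0 : Fin 2), j) P

/-- `⟨x,∂_u⟩ = Σ_j x_j ∂_{u_j}`. -/
def xDu {m : ℕ} (P : MvPolynomial (Fin 2 × Fin m) ℝ) : MvPolynomial (Fin 2 × Fin m) ℝ :=
  ∑ j : Fin m, X ((0 : Fin 2), j) * pderiv ((1 : Fin 2), j) P

/-- `⟨∂_u,∂_x⟩ = Σ_j ∂_{u_j} ∂_{x_j}`. -/
def duDx {m : ℕ} (P : MvPolynomial (Fin 2 × Fin m) ℝ) : MvPolynomial (Fin 2 × Fin m) ℝ :=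
  ∑ j : Fin m, pderiv ((1 : Fin 2), j) (pderiv ((0 : Fin 2), j) P)

/-- Euler operator in `x`. -/
def eulerX {m : ℕ} (P : MvPolynomial (Fin 2 × Fin m) ℝ) : MvPolynomial (Fin 2 × Fin m) ℝ :=
  ∑ j : Fin m, X ((0 : Fin 2), j) * pderiv ((0 : Fin 2), j) P

/-- Euler operator in `u`. -/
def eulerU {m : ℕ} (P : MvPolynomial (Fin 2 × Fin m) ℝ) : MvPolynomial (Fin 2 × Fin m) ℝ :=
  ∑ j : Fin m, X ((1 : Fin 2), j) * pderiv ((1 : Fin 2), j) P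

/-- The polynomial `⟨u,x⟩ = Σ_j u_j x_j`. -/
def ipUX (m : ℕ) : MvPolynomial (Fin 2 × Fin m) ℝ :=
  ∑ j : Fin m, X ((1 : Fin 2), j) * X ((0 : Fin 2), j)

/-- The polynomial `|u|² = Σ_j u_j²`. -/
def normSqU (m : ℕ) : MvPolynomial (Fin 2 × Fin m) ℝ :=
  ∑ j : Fin m, X ((1 : Fin 2), j) ^ 2

/-- The polynomial `|x|² = Σ_j x_j²`. -/
def normSqX (m : ℕ) : MvPolynomial (Fin 2 × Fin m) ℝ :=
  ∑ j : Fin m, X ((0 : Fin 2), j) ^ 2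

end

section Aux

variable {σ : Type*} [DecidableEq σ]

lemma my_pderiv_comm (i j : σ) (P : MvPolynomial σ ℝ) :
    pderiv i (pderiv j P) = pderiv j (pderiv i P) := by
  induction P using MvPolynomial.induction_on' with
  | add p q hp hq => simp [hp, hq]
  | monomial s a =>
    by_cases h : i = j
    · subst h; rfl
    · simp only [pderiv_monomial]
      rw [Finsupp.tsub_apply, Finsupp.tsub_apply, Finsupp.single_eq_of_ne h,
        Finsupp.single_eq_of_ne (Ne.symm h), tsub_zero, tsub_zero]
      congr 1
      · rw [tsub_tsub, tsub_tsub, add_comm]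
      · ring

lemma pd_pd_swap (a b : σ) (P : MvPolynomial σ ℝ) :
    pderiv a (pderiv a (pderiv b P)) = pderiv b (pderiv a (pderiv a P)) := by
  rw [my_pderiv_comm a b P, my_pderiv_comm a b (pderiv a P)]

lemma pd_X_mul (a c : σ) (P : MvPolynomial σ ℝ) :
    pderiv a (X c * P) = X c * pderiv a P + if c = a then P else 0 := by
  by_cases h : c = a
  · subst h; simp [pderiv_mul]
  · simp [pderiv_mul, pderiv_X_of_ne h, h]

lemma pd_pd_X_mul (i j : σ) (P : MvPolynomial σ ℝ) :
    pderiv i (pderiv i (X j * P)) =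
      X j * pderiv i (pderiv i P) + if j = i then (2:ℝ) • pderiv i P else 0 := by
  rw [pd_X_mul, map_add, pd_X_mul]
  by_cases h : j = i
  · subst h; simp; module
  · simp [h]

lemma pd_pd_Xsq_mul (i j : σ) (P : MvPolynomial σ ℝ) :
    pderiv i (pderiv i (X j ^ 2 * P)) =
      X j ^ 2 * pderiv i (pderiv i P) +
        if j = i then (2:ℝ) • P + (4:ℝ) • (X j * pderiv i P) else 0 := by
  by_cases h : j = i
  · subst h
    have h2 : pderiv j (X j ^ 2 : MvPolynomial σ ℝ) = 2 * X j := by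
      rw [sq, pderiv_mul, pderiv_X_self]; ring
    have e1 : pderiv j (X j ^ 2 * P) = 2 * X j * P + X j ^ 2 * pderiv j P := by
      rw [pderiv_mul, h2]
    have e2 : pderiv j ((2 : MvPolynomial σ ℝ) * X j) = 2 := by
      rw [pderiv_mul, pderiv_X_self, ← map_ofNat (C : ℝ →+* MvPolynomial σ ℝ) 2, pderiv_C]
      ring
    rw [if_pos rfl, e1, map_add, pderiv_mul, e2, pderiv_mul, h2]
    simp only [smul_eq_C_mul]
    have h2' : (C (2:ℝ) : MvPolynomial σ ℝ) = 2 := map_ofNat _ 2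
    have h4 : (C (4:ℝ) : MvPolynomial σ ℝ) = 4 := map_ofNat _ 4
    rw [h2', h4]; ring
  · have h0 : pderiv i (X j ^ 2 : MvPolynomial σ ℝ) = 0 := by
      rw [sq, pderiv_mul, pderiv_X_of_ne h]; ring
    simp [pderiv_mul, h0, h]

lemma coeff_X_mul_pderiv (i : σ) (P : MvPolynomial σ ℝ) (d : σ →₀ ℕ) :
    coeff d (X i * pderiv i P) = (d i : ℝ) * coeff d P := by
  induction P using MvPolynomial.induction_on' with
  | add p q hp hq => simp [mul_add, hp, hq, mul_add]
  | monomial s a =>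
    rw [pderiv_monomial, X, monomial_mul, one_mul]
    by_cases hs : s i = 0
    · rw [hs]
      have h1 : (monomial (Finsupp.single i 1 + (s - Finsupp.single i 1)))
          (a * ((0:ℕ):ℝ)) = 0 := by simp
      rw [h1, coeff_zero, coeff_monomial]
      split_ifs with hd
      · subst hd; rw [hs]; simp
      · ring
    · have hle : Finsupp.single i 1 ≤ s := by
        rw [Finsupp.single_le_iff]; omega
      rw [add_tsub_cancel_of_le hle, coeff_monomial, coeff_monomial]
      split_ifs with hd
      · subst hd; ring
      · ring

end Aux

section Ops

variable {m : ℕ}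

lemma lapU_sub_smul (P Q : MvPolynomial (Fin 2 × Fin m) ℝ) (c : ℝ) :
    lapU (P - c • Q) = lapU P - c • lapU Q := by
  simp [lapU, map_sub, map_smul, Finset.sum_sub_distrib, Finset.smul_sum]

lemma lapU_uDx (f : MvPolynomial (Fin 2 × Fin m) ℝ) (h : lapU f = 0) :
    lapU (uDx f) = (2:ℝ) • duDx f := by
  unfold lapU uDx duDx at *
  calc ∑ i : Fin m, pderiv ((1:Fin 2), i) (pderiv ((1:Fin 2), i)
        (∑ j : Fin m, X ((1:Fin 2), j) * pderiv ((0:Fin 2), j) f))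
      = ∑ i : Fin m, ∑ j : Fin m, pderiv ((1:Fin 2), i) (pderiv ((1:Fin 2), i)
          (X ((1:Fin 2), j) * pderiv ((0:Fin 2), j) f)) := by
        simp [map_sum]
    _ = ∑ i : Fin m, ∑ j : Fin m,
          (X ((1:Fin 2), j) * pderiv ((0:Fin 2), j)
              (pderiv ((1:Fin 2), i) (pderiv ((1:Fin 2), i) f)) +
            if j = i then (2:ℝ) • pderiv ((1:Fin 2), i) (pderiv ((0:Fin 2), j) f) else 0) := by
        refine Finset.sum_congr rfl fun i _ => Finset.sum_congr rfl fun j _ => ?_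
        rw [pd_pd_X_mul, pd_pd_swap]
        simp [Prod.mk.injEq]
    _ = (∑ j : Fin m, X ((1:Fin 2), j) * pderiv ((0:Fin 2), j)
          (∑ i : Fin m, pderiv ((1:Fin 2), i) (pderiv ((1:Fin 2), i) f))) +
        ∑ i : Fin m, (2:ℝ) • pderiv ((1:Fin 2), i) (pderiv ((0:Fin 2), i) f) := by
        simp only [Finset.sum_add_distrib]
        rw [Finset.sum_comm]
        congr 1
        · refine Finset.sum_congr rfl fun j _ => ?_
          rw [map_sum, Finset.mul_sum]
        · refine Finset.sum_congr rfl fun i _ => ?_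
          simp
    _ = (2:ℝ) • ∑ j : Fin m, pderiv ((1:Fin 2), j) (pderiv ((0:Fin 2), j) f) := by
        rw [h, Finset.smul_sum]
        simp

lemma lapU_duDx (f : MvPolynomial (Fin 2 × Fin m) ℝ) (h : lapU f = 0) :
    lapU (duDx f) = 0 := by
  unfold lapU duDx at *
  calc ∑ i : Fin m, pderiv ((1:Fin 2), i) (pderiv ((1:Fin 2), i)
        (∑ j : Fin m, pderiv ((1:Fin 2), j) (pderiv ((0:Fin 2), j) f)))
      = ∑ j : Fin m, pderiv ((1:Fin 2), j) (pderiv ((0:Fin 2), j)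
          (∑ i : Fin m, pderiv ((1:Fin 2), i) (pderiv ((1:Fin 2), i) f))) := by
        simp only [map_sum]
        rw [Finset.sum_comm]
        refine Finset.sum_congr rfl fun j _ => Finset.sum_congr rfl fun i _ => ?_
        rw [pd_pd_swap ((1:Fin 2), i) ((1:Fin 2), j),
          pd_pd_swap ((1:Fin 2), i) ((0:Fin 2), j)]
    _ = 0 := by rw [h]; simp

lemma lapU_normSq_mul (g : MvPolynomial (Fin 2 × Fin m) ℝ) :
    lapU (normSqU m * g) =
      (2 * (m:ℝ)) • g + (4:ℝ) • eulerU g + normSqU m * lapU g := by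
  unfold lapU normSqU eulerU
  calc ∑ i : Fin m, pderiv ((1:Fin 2), i) (pderiv ((1:Fin 2), i)
        ((∑ j : Fin m, X ((1:Fin 2), j) ^ 2) * g))
      = ∑ i : Fin m, ∑ j : Fin m, pderiv ((1:Fin 2), i) (pderiv ((1:Fin 2), i)
          (X ((1:Fin 2), j) ^ 2 * g)) := by
        simp [Finset.sum_mul, map_sum]
    _ = ∑ i : Fin m, ∑ j : Fin m,
          (X ((1:Fin 2), j) ^ 2 * pderiv ((1:Fin 2), i) (pderiv ((1:Fin 2), i) g) +
            if j = i then (2:ℝ) • g + (4:ℝ) • (X ((1:Fin 2), i) * pderiv ((1:Fin 2), i) g)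
              else 0) := by
        refine Finset.sum_congr rfl fun i _ => Finset.sum_congr rfl fun j _ => ?_
        rw [pd_pd_Xsq_mul]
        by_cases hji : j = i
        · subst hji; simp
        · simp [hji, Prod.mk.injEq]
    _ = (2 * (m:ℝ)) • g + (4:ℝ) • ∑ j : Fin m, X ((1:Fin 2), j) * pderiv ((1:Fin 2), j) g +
        (∑ j : Fin m, X ((1:Fin 2), j) ^ 2) *
          ∑ j : Fin m, pderiv ((1:Fin 2), j) (pderiv ((1:Fin 2), j) g) := by
        simp only [Finset.sum_add_distrib]
        rw [Finset.sum_comm]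
        have e1 : ∑ j : Fin m, ∑ i : Fin m,
            X ((1:Fin 2), j) ^ 2 * pderiv ((1:Fin 2), i) (pderiv ((1:Fin 2), i) g) =
            (∑ j : Fin m, X ((1:Fin 2), j) ^ 2) *
              ∑ i : Fin m, pderiv ((1:Fin 2), i) (pderiv ((1:Fin 2), i) g) := by
          rw [Finset.sum_mul]
          exact Finset.sum_congr rfl fun j _ => (Finset.mul_sum _ _ _).symm
        have e2 : ∑ i : Fin m, (∑ j : Fin m, if j = i then
            (2:ℝ) • g + (4:ℝ) • (X ((1:Fin 2), i) * pderiv ((1:Fin 2), i) g) else 0) =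
            (2 * (m:ℝ)) • g +
              (4:ℝ) • ∑ j : Fin m, X ((1:Fin 2), j) * pderiv ((1:Fin 2), j) g := by
          have : ∀ i : Fin m, (∑ j : Fin m, if j = i then
              (2:ℝ) • g + (4:ℝ) • (X ((1:Fin 2), i) * pderiv ((1:Fin 2), i) g) else 0) =
              (2:ℝ) • g + (4:ℝ) • (X ((1:Fin 2), i) * pderiv ((1:Fin 2), i) g) := by
            intro i; simp
          rw [Finset.sum_congr rfl fun i _ => this i, Finset.sum_add_distrib,
            Finset.sum_const, Finset.card_univ, Fintype.card_fin,
            ← Finset.smul_sum, ← Nat.cast_smul_eq_nsmul ℝ, smul_smul]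
          ring_nf
        rw [e1, e2]; abel

lemma eulerU_duDx (k : ℝ) (f : MvPolynomial (Fin 2 × Fin m) ℝ) (hh : eulerU f = k • f) :
    eulerU (duDx f) = (k - 1) • duDx f := by
  have term : ∀ i j : Fin m,
      pderiv ((1:Fin 2), j) (pderiv ((0:Fin 2), j) (X ((1:Fin 2), i) * pderiv ((1:Fin 2), i) f)) =
        X ((1:Fin 2), i) * pderiv ((1:Fin 2), i) (pderiv ((1:Fin 2), j) (pderiv ((0:Fin 2), j) f)) +
          if i = j then pderiv ((1:Fin 2), j) (pderiv ((0:Fin 2), j) f) else 0 := by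
    intro i j
    rw [pd_X_mul ((0:Fin 2), j) ((1:Fin 2), i), if_neg (by simp), add_zero,
      pd_X_mul ((1:Fin 2), j) ((1:Fin 2), i)]
    rw [my_pderiv_comm ((0:Fin 2), j) ((1:Fin 2), i) f,
      my_pderiv_comm ((1:Fin 2), j) ((1:Fin 2), i) (pderiv ((0:Fin 2), j) f)]
    congr 1
    by_cases h : i = j
    · subst h; simp
    · simp [Prod.mk.injEq, h]
  have key : duDx (eulerU f) = eulerU (duDx f) + duDx f := by
    unfold duDx eulerU
    calc ∑ j : Fin m, pderiv ((1:Fin 2), j) (pderiv ((0:Fin 2), j)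
          (∑ i : Fin m, X ((1:Fin 2), i) * pderiv ((1:Fin 2), i) f))
        = ∑ j : Fin m, ∑ i : Fin m, (X ((1:Fin 2), i) *
            pderiv ((1:Fin 2), i) (pderiv ((1:Fin 2), j) (pderiv ((0:Fin 2), j) f)) +
              if i = j then pderiv ((1:Fin 2), j) (pderiv ((0:Fin 2), j) f) else 0) := by
          simp only [map_sum]
          exact Finset.sum_congr rfl fun j _ => Finset.sum_congr rfl fun i _ => term i j
      _ = (∑ i : Fin m, X ((1:Fin 2), i) * pderiv ((1:Fin 2), i)
            (∑ j : Fin m, pderiv ((1:Fin 2), j) (pderiv ((0:Fin 2), j) f))) +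
          ∑ j : Fin m, pderiv ((1:Fin 2), j) (pderiv ((0:Fin 2), j) f) := by
          simp only [Finset.sum_add_distrib]
          rw [Finset.sum_comm]
          congr 1
          · refine Finset.sum_congr rfl fun i _ => ?_
            rw [map_sum, Finset.mul_sum]
          · refine Finset.sum_congr rfl fun j _ => ?_
            simp
  have lhs : duDx (eulerU f) = k • duDx f := by
    rw [hh]; simp [duDx, map_smul, Finset.smul_sum]
  rw [lhs] at key
  rw [sub_smul, one_smul]
  exact eq_sub_of_add_eq key.symm

lemma eulerU_neg_one (g : MvPolynomial (Fin 2 × Fin m) ℝ)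
    (h : eulerU g = ((-1:ℝ)) • g) : g = 0 := by
  ext d
  have hc := congrArg (coeff d) h
  rw [coeff_smul, smul_eq_mul] at hc
  have he : coeff d (eulerU g) = (∑ j : Fin m, (d ((1:Fin 2), j) : ℝ)) * coeff d g := by
    unfold eulerU
    rw [coeff_sum, Finset.sum_mul]
    exact Finset.sum_congr rfl fun j _ => coeff_X_mul_pderiv _ g d
  rw [he] at hc
  set S := ∑ j : Fin m, (d ((1:Fin 2), j) : ℝ) with hSdef
  have hS : (0:ℝ) ≤ S := Finset.sum_nonneg fun _ _ => Nat.cast_nonneg _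
  have h0 : (S + 1) * coeff d g = 0 := by linear_combination hc
  rcases mul_eq_zero.mp h0 with h1 | h1
  · linarith
  · simpa using h1

end Ops

/-- The projected twistor operator `T = π_u[⟨u,∂_x⟩] = ⟨u,∂_x⟩ - |u|²⟨∂_u,∂_x⟩/(2E_u+m-4)`
maps `u`-harmonic polynomials, homogeneous of degree `k` in `u`, to `u`-harmonic polynomials.
(On the component `|u|²⟨∂_u,∂_x⟩f`, which is homogeneous of degree `k+1` in `u`, the
denominator `2E_u + m - 4` acts by the scalar `2(k+1)+m-4 = 2k+m-2`.) -/
theorem twistor_preserves_harmonicity (m k : ℕ) (f : MvPolynomial (Fin 2 × Fin m) ℝ)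
    (hharm : lapU f = 0) (hhom : eulerU f = (k : ℝ) • f)
    (hnz : 2 * (k : ℝ) + m - 4 ≠ 0) :
    lapU (uDx f - (2 * ((k : ℝ) + 1) + m - 4)⁻¹ • (normSqU m * duDx f)) = 0 := by
  rcases eq_or_ne (2 * ((k:ℝ) + 1) + (m:ℝ) - 4) 0 with hc | hc
  · have hg0 : duDx f = 0 := by
      have hr : 2 * (k:ℝ) + (m:ℝ) = 2 := by linarith
      have hnat : 2 * k + m = 2 := by exact_mod_cast hr
      rcases (by omega : k = 0 ∨ m = 0) with hk | hm
      · subst hk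
        apply eulerU_neg_one
        have h1 := eulerU_duDx (0:ℝ) f (by simpa using hhom)
        simpa using h1
      · subst hm
        simp [duDx]
    rw [hg0, mul_zero, smul_zero, sub_zero, lapU_uDx f hharm, hg0, smul_zero]
  · rw [lapU_sub_smul, lapU_uDx f hharm, lapU_normSq_mul, lapU_duDx f hharm,
      eulerU_duDx (k:ℝ) f hhom, mul_zero]
    have hcc : (2 * ((k:ℝ) + 1) + m - 4)⁻¹ * (2 * (m:ℝ) + 4 * ((k:ℝ) - 1)) = 2 := by
      field_simp
      ring
    match_scalars
    · field_simp
      ring
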